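/- Let f be holomorphic on the closed sector S̄(−α,α,r_0), of order at most ρ with 0 < ρ < π/(2α). If h_{f,ρ}(±α) ≤ 0 then for every a > 0 there is a constant C > 0 such that |f(z)| ≤ C·e^{a|z|^ρ} on S̄(−α,α,r_0). -/

import Mathlib

/-!
In logarithmic coordinates `z = e^w` the sector outside a large disc `|z| ≤ R` becomes the
half-strip `log R < re w, |im w| < α`, on which `g w = exp (-a e^{ρ w}) f (e^w)` grows at most
like `exp (e^{ρ' re w})` for some `ρ' < π / (2α)`. Since `h_{f,ρ}(±α) ≤ 0`, far out on the two
boundary rays `|f| ≤ exp (a cos (ρα) r^ρ)`, which is exactly what makes `|g| ≤ 1` there, and on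
the arc `|z| = R` the function `f` is bounded by compactness. The Phragmén–Lindelöf principle in
a half-strip then bounds `g`, hence `|f z| ≤ C e^{a |z|^ρ}` on the open sector, and by continuity
on its closure.
-/

noncomputable section

/-- The open sector `S(α,β,r₀) = {r·e^{iθ} : r > r₀, α < θ < β}`. -/
def Sector (α β r₀ : ℝ) : Set ℂ :=
  {z | ∃ r θ : ℝ, r₀ < r ∧ α < θ ∧ θ < β ∧ z = (r : ℂ) * Complex.exp (θ * Complex.I)}

/-- `f` is of order at most `ρ` on the set `S`: for every `ρ' > ρ` there is a
constant `C` with `|f(z)| ≤ C·exp(|z|^{ρ'})` on `S`. -/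
def OrderAtMost (f : ℂ → ℂ) (S : Set ℂ) (ρ : ℝ) : Prop :=
  ∀ ρ' > ρ, ∃ C > 0, ∀ z ∈ S, ‖f z‖ ≤ C * Real.exp (‖z‖ ^ ρ')

/-- The indicator of order `ρ` of `f` in the direction `θ`:
`h_{f,ρ}(θ) = limsup_{r→∞} log|f(r e^{iθ})| / r^ρ`. -/
def Indicator (f : ℂ → ℂ) (ρ θ : ℝ) : ℝ :=
  Filter.limsup
    (fun r : ℝ => Real.log ‖f ((r : ℂ) * Complex.exp (θ * Complex.I))‖ / r ^ ρ)
    Filter.atTop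

/-- The indicator of `f` of order `ρ` in the direction `θ` is finite (bounded above). -/
def IndicatorFinite (f : ℂ → ℂ) (ρ θ : ℝ) : Prop :=
  Filter.IsBoundedUnder (· ≤ ·) Filter.atTop
    (fun r : ℝ => Real.log ‖f ((r : ℂ) * Complex.exp (θ * Complex.I))‖ / r ^ ρ)

open Complex Set Filter Topology
open scoped Real

lemma Real.cos_le_cos_of_abs_le {x y : ℝ} (hxy : |x| ≤ y) (hy : y ≤ π) :
    Real.cos y ≤ Real.cos x := by
  rw [← Real.cos_abs x]
  exact Real.cos_le_cos_of_nonneg_of_le_pi (abs_nonneg x) hy hxy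

lemma norm_exp_neg_mul_exp_le {ε d b : ℝ} (hε : 0 ≤ ε) (hd : 0 ≤ d) (hdb : d * b ≤ π)
    {w : ℂ} (hw : |w.im| ≤ b) :
    ‖exp (-ε * exp (d * w))‖ ≤ Real.exp (-(ε * Real.cos (d * b) * Real.exp (d * w.re))) := by
  have hcos : Real.cos (d * b) ≤ Real.cos (d * w.im) :=
    Real.cos_le_cos_of_abs_le (by rw [abs_mul, abs_of_nonneg hd]; gcongr) hdb
  rw [norm_exp, Real.exp_le_exp]
  simp only [neg_mul, neg_re, mul_re, mul_im, ofReal_re, ofReal_im, exp_re, zero_mul, sub_zero,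
    add_zero]
  have := mul_le_mul_of_nonneg_left hcos (mul_nonneg hε (Real.exp_pos (d * w.re)).le)
  linarith

lemma norm_exp_neg_mul_exp_le_one {ε d b : ℝ} (hε : 0 ≤ ε) (hd : 0 ≤ d) (hdb : d * b ≤ π / 2)
    {w : ℂ} (hw : |w.im| ≤ b) : ‖exp (-ε * exp (d * w))‖ ≤ 1 := by
  refine (norm_exp_neg_mul_exp_le hε hd (by linarith [Real.pi_pos]) hw).trans ?_
  rw [Real.exp_le_one_iff, neg_nonpos]
  have hb : 0 ≤ b := (abs_nonneg _).trans hw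
  have : 0 ≤ Real.cos (d * b) := Real.cos_nonneg_of_neg_pi_div_two_le_of_le
    (by nlinarith [Real.pi_pos]) hdb
  positivity

lemma tendsto_mul_exp_exp_mul_exp_neg_exp_of_lt {A B c d κ : ℝ} (hcd : c < d) (hd : 0 < d)
    (hκ : 0 < κ) :
    Tendsto (fun R => A * Real.exp (B * Real.exp (c * R)) * Real.exp (-(κ * Real.exp (d * R))))
      atTop (𝓝 0) := by
  have hlin : Tendsto (fun R => B * Real.exp ((c - d) * R) - κ) atTop (𝓝 (B * 0 - κ)) :=
    ((Real.tendsto_exp_atBot.comp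
      (tendsto_id.const_mul_atTop_of_neg (sub_neg.2 hcd))).const_mul B).sub_const κ
  rw [mul_zero, zero_sub] at hlin
  have hexp := Real.tendsto_exp_atTop.comp (tendsto_id.const_mul_atTop hd)
  have := (Real.tendsto_exp_atBot.comp (hexp.atTop_mul_neg (neg_neg_of_pos hκ) hlin)).const_mul A
  rw [mul_zero] at this
  refine this.congr fun R => ?_
  simp only [Function.comp, id, mul_assoc, ← Real.exp_add]
  congr 2
  rw [mul_sub, ← mul_assoc, mul_comm (Real.exp _) B, mul_assoc, ← Real.exp_add]
  ring_nf

lemma norm_exp_rpow (u : ℂ) (s : ℝ) : ‖exp u‖ ^ s = Real.exp (s * u.re) := by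
  rw [norm_exp, ← Real.exp_mul, mul_comm]

section

variable {E : Type*} [NormedAddCommGroup E] [NormedSpace ℂ E]

lemma norm_le_of_norm_exp_neg_mul_exp_smul_le {a ρ C : ℝ} (ha : 0 ≤ a) {w : ℂ} {y : E}
    (h : ‖exp (-a * exp (ρ * w)) • y‖ ≤ C) : ‖y‖ ≤ C * Real.exp (a * ‖exp w‖ ^ ρ) := by
  have hy : y = exp (a * exp (ρ * w)) • exp (-a * exp (ρ * w)) • y := by
    rw [smul_smul, ← exp_add, neg_mul, add_neg_cancel, exp_zero, one_smul]
  have hnorm : ‖(a : ℂ) * exp (ρ * w)‖ = a * ‖exp w‖ ^ ρ := by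
    rw [norm_mul, norm_real, Real.norm_of_nonneg ha, norm_exp, norm_exp_rpow]
    simp
  calc ‖y‖ = ‖exp (a * exp (ρ * w))‖ * ‖exp (-a * exp (ρ * w)) • y‖ := by
        rw [← norm_smul, ← hy]
    _ ≤ Real.exp (a * ‖exp w‖ ^ ρ) * C := by
        gcongr
        rw [norm_exp, ← hnorm, Real.exp_le_exp]
        exact re_le_norm _
    _ = C * Real.exp (a * ‖exp w‖ ^ ρ) := mul_comm _ _

lemma norm_exp_neg_mul_exp_smul_le_one {a ρ b : ℝ} (ha : 0 ≤ a) (hρ : 0 ≤ ρ) (hρb : ρ * b ≤ π)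
    {u : ℂ} (hu : |u.im| ≤ b) {y : E}
    (hy : ‖y‖ ≤ Real.exp (a * Real.cos (ρ * b) * Real.exp (ρ * u.re))) :
    ‖exp (-a * exp (ρ * u)) • y‖ ≤ 1 :=
  calc ‖exp (-a * exp (ρ * u)) • y‖
      ≤ Real.exp (-(a * Real.cos (ρ * b) * Real.exp (ρ * u.re))) *
          Real.exp (a * Real.cos (ρ * b) * Real.exp (ρ * u.re)) := by
        rw [norm_smul]
        exact mul_le_mul (norm_exp_neg_mul_exp_le ha hρ hρb hu) hy (norm_nonneg _)
          (Real.exp_pos _).le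
    _ = 1 := by rw [← Real.exp_add, neg_add_cancel, Real.exp_zero]

theorem PhragmenLindelof.horizontal_half_strip {f : ℂ → E} {L b c A B C : ℝ} (hc : c < π / (2 * b))
    (hfd : DiffContOnCl ℂ f (Ioi L ×ℂ Ioo (-b) b))
    (hgrowth : ∀ w ∈ Ioi L ×ℂ Ioo (-b) b, ‖f w‖ ≤ A * Real.exp (B * Real.exp (c * w.re)))
    (hleft : ∀ w : ℂ, w.re = L → |w.im| ≤ b → ‖f w‖ ≤ C)
    (hedge : ∀ w : ℂ, L ≤ w.re → |w.im| = b → ‖f w‖ ≤ C)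
    {z : ℂ} (hzre : L ≤ z.re) (hzim : |z.im| ≤ b) : ‖f z‖ ≤ C := by
  rcases hzim.eq_or_lt with hzb | hzb
  · exact hedge z hzre hzb
  have hb : 0 < b := (abs_nonneg _).trans_lt hzb
  wlog hC : 0 < C generalizing C
  · refine le_of_forall_gt_imp_ge_of_dense fun C' hC' =>
      this (fun w hw him => (hleft w hw him).trans hC'.le)
        (fun w hw him => (hedge w hw him).trans hC'.le) ?_
    have hcorner := hedge (L + b * I) (by simp) (by simp [hb.le])
    exact (norm_nonneg _).trans_lt (hcorner.trans_lt hC')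
  obtain ⟨d, ⟨hcd, hd₀⟩, hdb⟩ : ∃ d, (c < d ∧ 0 < d) ∧ d < π / (2 * b) := by
    simpa only [max_lt_iff] using exists_between (max_lt hc (by positivity : 0 < π / (2 * b)))
  have hdb' : d * b < π / 2 := by
    rw [lt_div_iff₀ (by positivity)] at hdb; linarith
  have hκ : 0 < Real.cos (d * b) :=
    Real.cos_pos_of_mem_Ioo ⟨by nlinarith [Real.pi_pos], hdb'⟩
  -- the weight `exp (-ε e^{d w})` is `≤ 1` on the strip and kills the growth of `f` as `re w → ∞`
  suffices hε : ∀ ε : ℝ, 0 < ε → ‖exp (-ε * exp (d * z)) • f z‖ ≤ C by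
    have hlim : Tendsto (fun ε : ℝ => ‖exp (-ε * exp (d * z)) • f z‖) (𝓝[>] 0) (𝓝 ‖f z‖) := by
      refine Tendsto.mono_left ?_ nhdsWithin_le_nhds
      apply ((continuous_ofReal.neg.mul continuous_const).cexp.smul continuous_const).norm.tendsto'
      simp
    exact le_of_tendsto hlim (eventually_nhdsWithin_of_forall hε)
  intro ε hε
  obtain ⟨R, hzR, hLR, hR⟩ : ∃ R, z.re < R ∧ L < R ∧
      A * Real.exp (B * Real.exp (c * R)) * Real.exp (-(ε * Real.cos (d * b) * Real.exp (d * R)))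
        ≤ C :=
    ((eventually_gt_atTop z.re).and ((eventually_gt_atTop L).and
      ((tendsto_mul_exp_exp_mul_exp_neg_exp_of_lt hcd hd₀ (mul_pos hε hκ)).eventually
        (ge_mem_nhds hC)))).exists
  have hweight : ∀ w : ℂ, |w.im| ≤ b → ‖exp (-ε * exp (d * w))‖ ≤ 1 := fun w hw =>
    norm_exp_neg_mul_exp_le_one hε.le hd₀.le hdb'.le hw
  set V := Ioo L R ×ℂ Ioo (-b) b
  have hV : IsOpen V := isOpen_Ioo.reProdIm isOpen_Ioo
  have hclV : closure V = Icc L R ×ℂ Icc (-b) b := by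
    rw [closure_reProdIm, closure_Ioo hLR.ne, closure_Ioo (by linarith)]
  have hdV : DiffContOnCl ℂ (fun w => exp (-ε * exp (d * w)) • f w) V :=
    (by fun_prop : Differentiable ℂ fun w : ℂ => exp (-ε * exp (d * w))).diffContOnCl.smul
      (hfd.mono fun w hw => ⟨hw.1.1, hw.2⟩)
  refine norm_le_of_forall_mem_frontier_norm_le
    ((Metric.isBounded_Ioo L R).reProdIm (Metric.isBounded_Ioo _ _)) hdV (fun w hw => ?_)
    (by rw [hclV]; exact ⟨⟨hzre, hzR.le⟩, abs_le.1 hzim⟩)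
  rw [hV.frontier_eq, hclV] at hw
  obtain ⟨⟨⟨hwL, hwR⟩, hwb⟩, hwV⟩ := hw
  have hwb' : |w.im| ≤ b := abs_le.2 hwb
  rw [norm_smul]
  by_cases himb : |w.im| = b
  · exact (mul_le_mul (hweight w hwb') (hedge w hwL himb) (norm_nonneg _) zero_le_one).trans_eq
      (one_mul C)
  by_cases hreL : w.re = L
  · exact (mul_le_mul (hweight w hwb') (hleft w hreL hwb') (norm_nonneg _) zero_le_one).trans_eq
      (one_mul C)
  -- the remaining part of the frontier is the right side `re w = R`, inside the half-strip
  have him : w.im ∈ Ioo (-b) b := abs_lt.1 (hwb'.lt_of_ne himb)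
  have hreR : w.re = R := by
    by_contra h
    exact hwV ⟨⟨lt_of_le_of_ne hwL (Ne.symm hreL), lt_of_le_of_ne hwR h⟩, him⟩
  calc ‖exp (-ε * exp (d * w))‖ * ‖f w‖
      ≤ Real.exp (-(ε * Real.cos (d * b) * Real.exp (d * R))) *
          (A * Real.exp (B * Real.exp (c * R))) := by
        rw [← hreR]
        exact mul_le_mul (norm_exp_neg_mul_exp_le hε.le hd₀.le (by linarith [Real.pi_pos]) hwb')
          (hgrowth w ⟨show L < w.re from hreR ▸ hLR, him⟩) (norm_nonneg _) (by positivity)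
    _ ≤ C := by rw [mul_comm]; exact hR

end

lemma exp_eq_exp_re_mul_exp_im_mul_I (w : ℂ) :
    exp w = (Real.exp w.re : ℂ) * exp (w.im * I) := by
  rw [ofReal_exp, ← exp_add, re_add_im]

lemma exp_mem_sector {α β r₀ : ℝ} {w : ℂ} (hr : r₀ < Real.exp w.re) (hα : α < w.im)
    (hβ : w.im < β) : exp w ∈ Sector α β r₀ :=
  ⟨_, _, hr, hα, hβ, exp_eq_exp_re_mul_exp_im_mul_I w⟩

lemma exp_mem_closure_sector {α β r₀ : ℝ} (hαβ : α < β) {w : ℂ} (hr : r₀ < Real.exp w.re)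
    (hα : α ≤ w.im) (hβ : w.im ≤ β) : exp w ∈ closure (Sector α β r₀) := by
  refine map_mem_closure continuous_exp (s := Ici w.re ×ℂ Ioo α β) ?_ fun u hu =>
    exp_mem_sector (hr.trans_le (Real.exp_le_exp.2 hu.1)) hu.2.1 hu.2.2
  rw [closure_reProdIm, closure_Ici, closure_Ioo hαβ.ne]
  exact ⟨le_refl w.re, hα, hβ⟩

lemma exists_exp_eq_of_mem_sector {α β r₀ : ℝ} {z : ℂ} (hz : z ∈ Sector α β r₀)
    (hr₀ : -r₀ ≤ ‖z‖) : ∃ w, exp w = z ∧ α < w.im ∧ w.im < β := by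
  obtain ⟨r, θ, hr, hα, hβ, rfl⟩ := hz
  rw [norm_mul, norm_exp_ofReal_mul_I, mul_one, norm_real, Real.norm_eq_abs] at hr₀
  have hr0 : 0 < r := by
    by_contra! h
    rw [abs_of_nonpos h] at hr₀
    linarith
  refine ⟨Real.log r + θ * I, ?_, by simpa using hα, by simpa using hβ⟩
  rw [exp_add, ← ofReal_exp, Real.exp_log hr0]

lemma eventually_norm_le_exp_of_indicator_lt {f : ℂ → ℂ} {ρ θ δ : ℝ}
    (hfin : IndicatorFinite f ρ θ) (hind : Indicator f ρ θ < δ) :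
    ∀ᶠ r : ℝ in atTop, ‖f (r * exp (θ * I))‖ ≤ Real.exp (δ * r ^ ρ) := by
  filter_upwards [eventually_lt_of_limsup_lt hind hfin, eventually_gt_atTop 0] with r hr hr0
  rw [div_lt_iff₀ (Real.rpow_pos_of_pos hr0 ρ)] at hr
  exact (Real.le_exp_log _).trans (Real.exp_le_exp.2 hr.le)

theorem norm_le_mul_exp_rpow_on_sector {f : ℂ → ℂ} {α r₀ ρ ρ' a A C R : ℝ}
    (hα : 0 < α) (hρ : 0 ≤ ρ) (hρα : ρ * α ≤ π / 2) (hρ' : ρ' < π / (2 * α)) (ha : 0 < a)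
    (hC : 1 ≤ C) (hR : |r₀| < R)
    (hf : DifferentiableOn ℂ f (closure (Sector (-α) α r₀)))
    (hgrowth : ∀ z ∈ Sector (-α) α r₀, ‖f z‖ ≤ A * Real.exp (‖z‖ ^ ρ'))
    (hdisc : ∀ z ∈ closure (Sector (-α) α r₀), ‖z‖ ≤ R → ‖f z‖ ≤ C)
    (hrays : ∀ r : ℝ, R ≤ r → ∀ θ : ℝ, |θ| = α →
      ‖f (r * exp (θ * I))‖ ≤ Real.exp (a * Real.cos (ρ * α) * r ^ ρ)) :
    ∀ z ∈ Sector (-α) α r₀, ‖f z‖ ≤ C * Real.exp (a * ‖z‖ ^ ρ) := by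
  intro z hz
  rcases le_or_gt ‖z‖ R with hzR | hzR
  · exact (hdisc z (subset_closure hz) hzR).trans
      (le_mul_of_one_le_right (by linarith) (Real.one_le_exp (by positivity)))
  obtain ⟨w, rfl, hw₁, hw₂⟩ :=
    exists_exp_eq_of_mem_sector hz (by linarith [neg_abs_le r₀])
  have hR₀ : 0 < R := (abs_nonneg r₀).trans_lt hR
  set L := Real.log R
  have hR_le : ∀ u : ℂ, L ≤ u.re → R ≤ Real.exp u.re := fun u hu =>
    (Real.log_le_iff_le_exp hR₀).1 hu
  have hr₀ : ∀ u : ℂ, L ≤ u.re → r₀ < Real.exp u.re := fun u hu =>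
    (le_abs_self r₀).trans_lt (hR.trans_le (hR_le u hu))
  have hmaps : ∀ u : ℂ, L ≤ u.re → |u.im| ≤ α → exp u ∈ closure (Sector (-α) α r₀) :=
    fun u hu him =>
      exp_mem_closure_sector (by linarith) (hr₀ u hu) (abs_le.1 him).1 (abs_le.1 him).2
  have hweight : ∀ u : ℂ, |u.im| ≤ α → ‖exp (-a * exp (ρ * u))‖ ≤ 1 := fun u =>
    norm_exp_neg_mul_exp_le_one ha.le hρ hρα
  have hdiff : DiffContOnCl ℂ (fun u => exp (-a * exp (ρ * u)) • f (exp u))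
      (Ioi L ×ℂ Ioo (-α) α) := by
    refine DifferentiableOn.diffContOnCl ((by fun_prop : Differentiable ℂ
      fun u : ℂ => exp (-a * exp (ρ * u))).differentiableOn.smul
        (hf.comp differentiable_exp.differentiableOn fun u hu => ?_))
    rw [closure_reProdIm, closure_Ioi, closure_Ioo (by linarith)] at hu
    exact hmaps u hu.1 (abs_le.2 hu.2)
  have hwL : L ≤ w.re := (Real.log_le_log hR₀ hzR.le).trans_eq (by rw [norm_exp, Real.log_exp])
  refine norm_le_of_norm_exp_neg_mul_exp_smul_le ha.le
    (PhragmenLindelof.horizontal_half_strip (A := A) (B := 1) hρ' hdiff (fun u hu => ?_)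
      (fun u hu him => ?_) (fun u hu him => ?_) hwL (abs_le.2 ⟨hw₁.le, hw₂.le⟩))
  · have him := abs_lt.2 hu.2
    rw [norm_smul, one_mul, ← norm_exp_rpow]
    exact (mul_le_mul (hweight u him.le) (hgrowth _ (exp_mem_sector (hr₀ u hu.1.le) hu.2.1 hu.2.2))
      (norm_nonneg _) zero_le_one).trans_eq (one_mul _)
  · have hnorm : ‖exp u‖ ≤ R := by rw [norm_exp, hu, Real.exp_log hR₀]
    rw [norm_smul]
    exact (mul_le_mul (hweight u him) (hdisc _ (hmaps u hu.ge him) hnorm) (norm_nonneg _)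
      zero_le_one).trans_eq (one_mul C)
  · have hray := hrays _ (hR_le u hu) u.im him
    rw [← exp_eq_exp_re_mul_exp_im_mul_I, ← Real.exp_mul, mul_comm u.re] at hray
    exact (norm_exp_neg_mul_exp_smul_le_one ha.le hρ (by linarith [Real.pi_pos]) him.le
      hray).trans hC

/-- Corollary 2.4 (iii): if `f` is holomorphic on the closed sector of order at most
`ρ < π/(2α)` and `h_{f,ρ}(±α) ≤ 0`, then for every `a > 0` there is `C > 0` with
`|f(z)| ≤ C·e^{a|z|^ρ}` on the closed sector. -/
theorem stmt_7 (α r₀ ρ : ℝ) (hα : 0 < α) (hρ : 0 < ρ) (hρα : ρ < Real.pi / (2 * α))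
    (f : ℂ → ℂ)
    (hf : DifferentiableOn ℂ f (closure (Sector (-α) α r₀)))
    (hford : OrderAtMost f (Sector (-α) α r₀) ρ)
    (hfin₁ : IndicatorFinite f ρ α) (hfin₂ : IndicatorFinite f ρ (-α))
    (hind₁ : Indicator f ρ α ≤ 0) (hind₂ : Indicator f ρ (-α) ≤ 0) :
    ∀ a > 0, ∃ C > 0, ∀ z ∈ closure (Sector (-α) α r₀),
      ‖f z‖ ≤ C * Real.exp (a * ‖z‖ ^ ρ) := by
  intro a ha
  have hρα' : ρ * α < π / 2 := by
    rw [lt_div_iff₀ (by positivity)] at hρα; linarith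
  obtain ⟨ρ', hρρ', hρ'α⟩ := exists_between hρα
  obtain ⟨A, -, hA⟩ := hford ρ' hρρ'
  have hδ : 0 < a * Real.cos (ρ * α) :=
    mul_pos ha (Real.cos_pos_of_mem_Ioo ⟨by nlinarith [Real.pi_pos], hρα'⟩)
  obtain ⟨R₁, hR₁⟩ := eventually_atTop.1
    ((eventually_norm_le_exp_of_indicator_lt hfin₁ (hind₁.trans_lt hδ)).and
      (eventually_norm_le_exp_of_indicator_lt hfin₂ (hind₂.trans_lt hδ)))
  set R := max R₁ (|r₀| + 1)
  obtain ⟨M, hM⟩ := ((isCompact_closedBall 0 R).inter_left isClosed_closure)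
    |>.exists_bound_of_continuousOn (hf.continuousOn.mono inter_subset_left)
  have hsector := norm_le_mul_exp_rpow_on_sector hα hρ.le hρα'.le hρ'α ha (le_max_right M 1)
    (by simp [R]) hf hA
    (fun z hz hzR => (hM z ⟨hz, mem_closedBall_zero_iff.2 hzR⟩).trans (le_max_left M 1))
    (fun r hr θ hθ => by
      rcases (abs_eq hα.le).1 hθ with rfl | rfl
      exacts [(hR₁ r ((le_max_left _ _).trans hr)).1, (hR₁ r ((le_max_left _ _).trans hr)).2])
  have hbound_cont : Continuous fun z : ℂ => max M 1 * Real.exp (a * ‖z‖ ^ ρ) := by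
    fun_prop (disch := positivity)
  refine ⟨max M 1, by positivity, fun z hz => ?_⟩
  exact ContinuousWithinAt.closure_le hz ((hf.continuousOn.norm z hz).mono subset_closure)
    hbound_cont.continuousWithinAt hsector
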